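/- arXiv:2101.09542 — 2 statements merged into one kernel-verified Lean document; each statement's English description precedes it below -/
import Mathlib

section
/- Let X and Y be independent standard normal random variables on a probability space, let p > -1 and c ∈ ℝ. Then E(|X² + Y² − c|^p) = 2^p e^{−c/2} (Γ(p+1) + ∫₀^{c/2} t^p e^t dt). -/
open MeasureTheory ProbabilityTheory

open Set intervalIntegral
open scoped ENNReal NNReal Real

lemma aux_abs_rpow {p : ℝ} (hp : -1 < p) (a b : ℝ) :
    IntervalIntegrable (fun t : ℝ => |t| ^ p) volume a b := by
  have key : ∀ c : ℝ, 0 ≤ c → IntervalIntegrable (fun t : ℝ => |t| ^ p) volume 0 c := by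
    intro c hc
    rw [intervalIntegrable_iff, uIoc_of_le hc]
    exact ((intervalIntegrable_rpow' hp (a := 0) (b := c)).1).congr_fun
      (fun x hx => by rw [abs_of_pos hx.1]) measurableSet_Ioc
  have habs : ∀ c : ℝ, IntervalIntegrable (fun t : ℝ => |t| ^ p) volume 0 c := by
    intro c
    rcases le_or_gt 0 c with hc | hc
    · exact key c hc
    · have := (IntervalIntegrable.iff_comp_neg (f := fun t : ℝ => |t| ^ p) (by simp)).mp (key (-c) (by linarith))
      simpa [abs_neg] using this
  exact (habs a).symm.trans (habs b)

lemma aux_k_II {p : ℝ} (hp : -1 < p) (a b : ℝ) :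
    IntervalIntegrable (fun t : ℝ => |t| ^ p * Real.exp (-t)) volume a b :=
  (aux_abs_rpow hp a b).mul_continuousOn (Real.continuous_exp.comp continuous_neg).continuousOn

lemma aux_k_int {p : ℝ} (hp : -1 < p) :
    IntegrableOn (fun t : ℝ => |t| ^ p * Real.exp (-t)) (Ioi 0) := by
  refine (Real.GammaIntegral_convergent (by linarith : (0:ℝ) < p + 1)).congr_fun
    (fun x hx => ?_) measurableSet_Ioi
  rw [add_sub_cancel_right, abs_of_pos hx, mul_comm]

lemma aux_split {p : ℝ} (hp : -1 < p) (a : ℝ) :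
    ∫ t in Ioi a, |t| ^ p * Real.exp (-t)
      = (∫ t in a..0, |t| ^ p * Real.exp (-t)) + ∫ t in Ioi (0:ℝ), |t| ^ p * Real.exp (-t) := by
  set k : ℝ → ℝ := fun t => |t| ^ p * Real.exp (-t) with hk
  rcases le_or_gt a 0 with ha | ha
  · rw [integral_of_le ha]
    rw [← Ioc_union_Ioi_eq_Ioi ha, setIntegral_union (Ioc_disjoint_Ioi le_rfl)
      measurableSet_Ioi (by rw [← uIoc_of_le ha, ← intervalIntegrable_iff]; exact aux_k_II hp a 0)
      (aux_k_int hp)]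
  · have h0 : (∫ t in Ioi (0:ℝ), k t) = (∫ t in Ioc 0 a, k t) + ∫ t in Ioi a, k t := by
      rw [← Ioc_union_Ioi_eq_Ioi ha.le, setIntegral_union (Ioc_disjoint_Ioi le_rfl)
        measurableSet_Ioi (by rw [← uIoc_of_le ha.le, ← intervalIntegrable_iff]; exact aux_k_II hp 0 a)
        ((aux_k_int hp).mono_set (Ioi_subset_Ioi ha.le))]
    rw [integral_symm, integral_of_le ha.le]
    linarith

lemma aux_gamma {p : ℝ} (hp : -1 < p) :
    ∫ t in Ioi (0:ℝ), |t| ^ p * Real.exp (-t) = Real.Gamma (p + 1) := by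
  rw [Real.Gamma_eq_integral (by linarith : (0:ℝ) < p + 1)]
  refine setIntegral_congr_fun measurableSet_Ioi fun x hx => ?_
  rw [add_sub_cancel_right, abs_of_pos hx, mul_comm]

lemma aux_reflect (p c : ℝ) :
    (∫ t in (-(c/2))..0, |t| ^ p * Real.exp (-t))
      = ∫ t in (0:ℝ)..(c/2), |t| ^ p * Real.exp t := by
  have := intervalIntegral.integral_comp_neg (a := (0:ℝ)) (b := c/2)
    (fun t => |t| ^ p * Real.exp (-t))
  simp only [abs_neg, neg_neg, neg_zero] at this
  rw [← this]

lemma aux_shift (g : ℝ → ℝ) (a c : ℝ) :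
    (∫ x in Ioi (a - c), g (x + c)) = ∫ x in Ioi a, g x := by
  have h := (measurePreserving_add_right (volume : Measure ℝ) c).setIntegral_preimage_emb
    (measurableEmbedding_addRight c) g (Ioi a)
  simpa using h

lemma aux_onedim {p : ℝ} (hp : -1 < p) (c : ℝ) :
    ∫ s in Ioi (0:ℝ), |s - c| ^ p * Real.exp (-s/2)
      = 2 ^ (p+1) * Real.exp (-c/2)
        * (Real.Gamma (p + 1) + ∫ t in (0:ℝ)..(c/2), |t| ^ p * Real.exp t) := by
  have h1 : (∫ s in Ioi (0:ℝ), |s - c| ^ p * Real.exp (-s/2))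
      = ∫ x in Ioi (-c), |x| ^ p * Real.exp (-(x + c)/2) := by
    have := aux_shift (fun s => |s - c| ^ p * Real.exp (-s/2)) 0 c
    simp only [zero_sub, add_sub_cancel_right] at this
    rw [← this]
  have h2 : (∫ x in Ioi (-c), |x| ^ p * Real.exp (-(x + c)/2))
      = 2 * ∫ x in Ioi (-(c/2)), |2 * x| ^ p * Real.exp (-(2 * x + c)/2) := by
    have := integral_comp_mul_left_Ioi (fun x => |x| ^ p * Real.exp (-(x + c)/2)) (-(c/2))
      (by norm_num : (0:ℝ) < 2)
    rw [show (2:ℝ) * -(c/2) = -c by ring] at this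
    rw [this, smul_eq_mul]
    ring
  have h3 : (∫ x in Ioi (-(c/2)), |2 * x| ^ p * Real.exp (-(2 * x + c)/2))
      = 2 ^ p * Real.exp (-c/2) * ∫ x in Ioi (-(c/2)), |x| ^ p * Real.exp (-x) := by
    rw [← MeasureTheory.integral_const_mul]
    refine setIntegral_congr_fun measurableSet_Ioi fun x _ => ?_
    rw [abs_mul, Real.mul_rpow (abs_nonneg _) (abs_nonneg _), abs_two,
      show -(2 * x + c)/2 = -x + -c/2 by ring, Real.exp_add]
    ring
  rw [h1, h2, h3, aux_split hp, aux_reflect, aux_gamma hp,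
    Real.rpow_add_one (by norm_num : (2:ℝ) ≠ 0)]
  ring

lemma aux_prod_wd :
    (gaussianReal 0 1).prod (gaussianReal 0 1)
      = (volume : Measure (ℝ × ℝ)).withDensity
          (fun z => gaussianPDF 0 1 z.1 * gaussianPDF 0 1 z.2) := by
  have hm := measurable_gaussianPDF (0:ℝ) 1
  refine Measure.prod_eq (μ := gaussianReal 0 1) (ν := gaussianReal 0 1) fun s t hs ht => ?_
  rw [withDensity_apply _ (hs.prod ht), Measure.volume_eq_prod, ← Measure.prod_restrict]
  rw [lintegral_prod_mul hm.aemeasurable hm.aemeasurable]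
  rw [gaussianReal_of_var_ne_zero _ one_ne_zero, withDensity_apply _ hs, withDensity_apply _ ht]

lemma aux_G_meas (c p : ℝ) : Measurable (fun s : ℝ => Real.exp (-s/2) * |s - c| ^ p) :=
  ((Real.measurable_exp.comp ((measurable_id.neg).div_const 2)).mul
    (((measurable_id.sub_const c).abs).pow_const p))

lemma aux_polar (c p : ℝ) :
    (∫ z : ℝ × ℝ, Real.exp (-(z.1 ^ 2 + z.2 ^ 2)/2) * |z.1 ^ 2 + z.2 ^ 2 - c| ^ p)
      = (2 * Real.pi) * ∫ r in Ioi (0:ℝ), r * (Real.exp (-(r^2)/2) * |r^2 - c| ^ p) := by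
  set G : ℝ → ℝ := fun s => Real.exp (-s/2) * |s - c| ^ p with hG
  have hGm : Measurable G := aux_G_meas c p
  rw [← integral_comp_polarCoord_symm (fun z => G (z.1 ^ 2 + z.2 ^ 2))]
  have hsq : ∀ q : ℝ × ℝ,
      (polarCoord.symm q).1 ^ 2 + (polarCoord.symm q).2 ^ 2 = q.1 ^ 2 := by
    intro q
    simp only [polarCoord_symm_apply]
    rw [mul_pow, mul_pow, ← mul_add, Real.cos_sq_add_sin_sq, mul_one]
  have h1 : (∫ q in polarCoord.target, q.1 • G ((polarCoord.symm q).1 ^ 2 + (polarCoord.symm q).2 ^ 2))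
      = ∫ q in Ioi (0:ℝ) ×ˢ Ioo (-Real.pi) Real.pi, q.1 * G (q.1 ^ 2) := by
    rw [polarCoord_target]
    exact setIntegral_congr_fun (measurableSet_Ioi.prod measurableSet_Ioo)
      (fun q _ => by rw [hsq q, smul_eq_mul])
  rw [h1]
  rw [Measure.volume_eq_prod, ← Measure.prod_restrict]
  have hF1 : Measurable (fun r : ℝ => r * G (r ^ 2)) := by fun_prop
  have h2 := integral_map (μ := (volume.restrict (Ioi (0:ℝ))).prod
      (volume.restrict (Ioo (-Real.pi) Real.pi)))
    measurable_fst.aemeasurable hF1.aestronglyMeasurable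
  rw [← h2, Measure.map_fst_prod, MeasureTheory.integral_smul_measure]
  rw [Measure.restrict_apply_univ, Real.volume_Ioo, smul_eq_mul]
  rw [show Real.pi - -Real.pi = 2 * Real.pi by ring,
    ENNReal.toReal_ofReal (by positivity)]

lemma aux_subst (c p : ℝ) :
    (∫ r in Ioi (0:ℝ), r * (Real.exp (-(r^2)/2) * |r^2 - c| ^ p))
      = (1/2) * ∫ s in Ioi (0:ℝ), Real.exp (-s/2) * |s - c| ^ p := by
  set G : ℝ → ℝ := fun s => Real.exp (-s/2) * |s - c| ^ p with hG
  have h := integral_comp_rpow_Ioi_of_pos (g := G) (p := 2) (by norm_num)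
  rw [← h, ← MeasureTheory.integral_const_mul]
  refine setIntegral_congr_fun measurableSet_Ioi fun x hx => ?_
  have hx0 : (0:ℝ) ≤ x := le_of_lt hx
  rw [smul_eq_mul, show ((2:ℝ) - 1) = 1 by norm_num, Real.rpow_one,
    show x ^ (2:ℝ) = x ^ 2 by rw [show (2:ℝ) = ((2:ℕ):ℝ) by norm_num, Real.rpow_natCast]]
  ring

lemma aux_gauss2 (p c : ℝ) :
    (∫ z : ℝ × ℝ, |z.1 ^ 2 + z.2 ^ 2 - c| ^ p
        ∂((gaussianReal 0 1).prod (gaussianReal 0 1)))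
      = (1/2) * ∫ s in Ioi (0:ℝ), |s - c| ^ p * Real.exp (-s/2) := by
  rw [aux_prod_wd]
  have hd : (fun z : ℝ × ℝ => gaussianPDF 0 1 z.1 * gaussianPDF 0 1 z.2)
      = fun z : ℝ × ℝ =>
        ((Real.toNNReal (gaussianPDFReal 0 1 z.1 * gaussianPDFReal 0 1 z.2) : ℝ≥0) : ℝ≥0∞) := by
    funext z
    rw [gaussianPDF_def]
    simp only []
    rw [← ENNReal.ofReal_mul (gaussianPDFReal_nonneg 0 1 z.1)]
    rfl
  have hmeas0 : Measurable (fun z : ℝ × ℝ => gaussianPDFReal 0 1 z.1 * gaussianPDFReal 0 1 z.2) :=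
    ((measurable_gaussianPDFReal 0 1).comp measurable_fst).mul
      ((measurable_gaussianPDFReal 0 1).comp measurable_snd)
  rw [hd, integral_withDensity_eq_integral_smul hmeas0.real_toNNReal]
  have hpt : ∀ z : ℝ × ℝ,
      (Real.toNNReal (gaussianPDFReal 0 1 z.1 * gaussianPDFReal 0 1 z.2) : ℝ≥0)
          • |z.1 ^ 2 + z.2 ^ 2 - c| ^ p
        = (2 * Real.pi)⁻¹
            * (Real.exp (-(z.1 ^ 2 + z.2 ^ 2)/2) * |z.1 ^ 2 + z.2 ^ 2 - c| ^ p) := by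
    intro z
    rw [NNReal.smul_def, smul_eq_mul,
      Real.coe_toNNReal _ (mul_nonneg (gaussianPDFReal_nonneg 0 1 z.1)
        (gaussianPDFReal_nonneg 0 1 z.2))]
    unfold gaussianPDFReal
    push_cast
    rw [mul_one, sub_zero, sub_zero, mul_one]
    have hs : (Real.sqrt (2 * Real.pi))⁻¹ * (Real.sqrt (2 * Real.pi))⁻¹ = (2 * Real.pi)⁻¹ := by
      rw [← mul_inv, Real.mul_self_sqrt (by positivity)]
    have he : Real.exp (-z.1 ^ 2 / 2) * Real.exp (-z.2 ^ 2 / 2)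
        = Real.exp (-(z.1 ^ 2 + z.2 ^ 2)/2) := by
      rw [← Real.exp_add]; ring_nf
    rw [← hs, ← he]
    ring
  rw [integral_congr_ae (Filter.Eventually.of_forall hpt), MeasureTheory.integral_const_mul,
    aux_polar c p, aux_subst c p]
  have hI : (∫ s in Ioi (0:ℝ), Real.exp (-s/2) * |s - c| ^ p)
      = ∫ s in Ioi (0:ℝ), |s - c| ^ p * Real.exp (-s/2) :=
    setIntegral_congr_fun measurableSet_Ioi fun x _ => mul_comm _ _
  rw [hI, ← mul_assoc, ← mul_assoc, inv_mul_cancel₀ (by positivity : (2*Real.pi) ≠ 0), one_mul]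

/-- **Lemma 4.7**: for independent standard normal `X, Y`, `p > -1` and `c ∈ ℝ`,
`E(|X² + Y² − c|^p) = 2^p e^{−c/2} (Γ(p+1) + ∫₀^{c/2} |t|^p e^t dt)`. -/
theorem chi_sq_two_abs_moment {Ω : Type*} [MeasureSpace Ω]
    [IsProbabilityMeasure (ℙ : Measure Ω)]
    (X Y : Ω → ℝ) (hX : Measurable X) (hY : Measurable Y)
    (hXY : IndepFun X Y ℙ)
    (hXd : Measure.map X ℙ = gaussianReal 0 1)
    (hYd : Measure.map Y ℙ = gaussianReal 0 1)
    (p : ℝ) (hp : -1 < p) (c : ℝ) :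
    ∫ ω, |X ω ^ 2 + Y ω ^ 2 - c| ^ p ∂ℙ
      = 2 ^ p * Real.exp (-c / 2)
        * (Real.Gamma (p + 1) + ∫ t in (0 : ℝ)..(c / 2), |t| ^ p * Real.exp t) := by
  have hmap : Measure.map (fun ω => (X ω, Y ω)) ℙ
      = (gaussianReal 0 1).prod (gaussianReal 0 1) := by
    have := (indepFun_iff_map_prod_eq_prod_map_map hX.aemeasurable hY.aemeasurable).mp hXY
    rwa [hXd, hYd] at this
  have hmeas : Measurable (fun z : ℝ × ℝ => |z.1 ^ 2 + z.2 ^ 2 - c| ^ p) :=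
    (((measurable_fst.pow_const 2).add (measurable_snd.pow_const 2)).sub_const c).abs.pow_const p
  have hstep : (∫ ω, |X ω ^ 2 + Y ω ^ 2 - c| ^ p ∂ℙ)
      = ∫ z : ℝ × ℝ, |z.1 ^ 2 + z.2 ^ 2 - c| ^ p
          ∂((gaussianReal 0 1).prod (gaussianReal 0 1)) := by
    rw [← hmap, integral_map (hX.prodMk hY).aemeasurable hmeas.aestronglyMeasurable]
  rw [hstep, aux_gauss2 p c, aux_onedim hp c,
    Real.rpow_add_one (by norm_num : (2:ℝ) ≠ 0)]
  ring
end

section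
/- Let A, B ∈ ℝ^{q×q} be symmetric matrices that commute (AB = BA), with A positive semidefinite and B positive definite, and let C ∈ ℝ^{r×q}. If λ_min^B > 0 denotes the smallest eigenvalue of B, then ‖C(A^{1/2} − B^{1/2})‖₂ ≤ (λ_min^B)^{−1/2} ‖C(A − B)‖₂, where ‖·‖₂ is the spectral (operator) norm and A^{1/2}, B^{1/2} are the positive semidefinite square roots. -/
open Matrix

/-- The spectral (operator) norm of a real matrix, induced by the Euclidean vector norm. -/
noncomputable def opNorm {r q : ℕ} (C : Matrix (Fin r) (Fin q) ℝ) : ℝ :=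
  ‖LinearMap.toContinuousLinearMap (Matrix.toEuclideanLin C)‖

/-- The positive semidefinite square root of a positive semidefinite matrix
(the definition `Matrix.PosSemidef.sqrt` of the older Mathlib, since removed). -/
noncomputable def Matrix.PosSemidef.sqrt {n : Type*} [Fintype n] [DecidableEq n] {𝕜 : Type*}
    [RCLike 𝕜] [PartialOrder 𝕜] {A : Matrix n n 𝕜} (hA : A.PosSemidef) : Matrix n n 𝕜 :=
  hA.1.eigenvectorUnitary.1 * diagonal ((↑) ∘ (√·) ∘ hA.1.eigenvalues) *
  (star hA.1.eigenvectorUnitary : Matrix n n 𝕜)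

lemma Matrix.PosSemidef.sqrt_mul_self {n : Type*} [Fintype n] [DecidableEq n]
    {A : Matrix n n ℝ} (hA : A.PosSemidef) : hA.sqrt * hA.sqrt = A := by
  have h1 : (star hA.1.eigenvectorUnitary : Matrix n n ℝ) * (hA.1.eigenvectorUnitary : Matrix n n ℝ)
      = 1 := (Matrix.mem_unitaryGroup_iff').mp hA.1.eigenvectorUnitary.2
  have hD : diagonal (RCLike.ofReal ∘ (√·) ∘ hA.1.eigenvalues : n → ℝ) *
      diagonal (RCLike.ofReal ∘ (√·) ∘ hA.1.eigenvalues : n → ℝ)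
      = diagonal (RCLike.ofReal ∘ hA.1.eigenvalues : n → ℝ) := by
    rw [diagonal_mul_diagonal]; congr 1; funext i
    simp [Real.mul_self_sqrt (hA.eigenvalues_nonneg i)]
  conv_rhs => rw [hA.1.spectral_theorem, Unitary.conjStarAlgAut_apply]
  rw [Matrix.PosSemidef.sqrt]
  rw [show ∀ U D V : Matrix n n ℝ, U * D * V * (U * D * V) = U * (D * (V * U) * D) * V from
    fun _ _ _ => by simp only [mul_assoc], h1, mul_one, hD]

lemma Matrix.PosSemidef.posSemidef_sqrt {n : Type*} [Fintype n] [DecidableEq n]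
    {A : Matrix n n ℝ} (hA : A.PosSemidef) : hA.sqrt.PosSemidef := by
  rw [Matrix.PosSemidef.sqrt]
  have := (Matrix.posSemidef_diagonal_iff.mpr (fun i => by simp [Real.sqrt_nonneg] :
    ∀ i, 0 ≤ (RCLike.ofReal ∘ (√·) ∘ hA.1.eigenvalues : n → ℝ) i)).mul_mul_conjTranspose_same
    (hA.1.eigenvectorUnitary : Matrix n n ℝ)
  simpa [Matrix.star_eq_conjTranspose, RCLike.ofReal_real_eq_id] using this

namespace Lemma43Aux

open Polynomial

variable {n : Type*} [Fintype n] [DecidableEq n]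

/-- Conjugation by a unitary matrix as an algebra homomorphism. -/
noncomputable def unitaryConjAlgHom (U : Matrix.unitaryGroup n ℝ) :
    Matrix n n ℝ →ₐ[ℝ] Matrix n n ℝ where
  toFun X := (U : Matrix n n ℝ) * X * (star U : Matrix n n ℝ)
  map_one' := by
    show (U : Matrix n n ℝ) * 1 * (star U : Matrix n n ℝ) = 1
    rw [mul_one]
    exact (Matrix.mem_unitaryGroup_iff).mp U.2
  map_mul' X Y := by
    show (U : Matrix n n ℝ) * (X * Y) * (star U : Matrix n n ℝ)
      = ((U : Matrix n n ℝ) * X * (star U : Matrix n n ℝ)) *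
        ((U : Matrix n n ℝ) * Y * (star U : Matrix n n ℝ))
    have h1 : (star U : Matrix n n ℝ) * (U : Matrix n n ℝ) = 1 :=
      (Matrix.mem_unitaryGroup_iff').mp U.2
    calc (U : Matrix n n ℝ) * (X * Y) * (star U : Matrix n n ℝ)
        = ((U : Matrix n n ℝ) * X) * ((star U : Matrix n n ℝ) * (U : Matrix n n ℝ)) *
            (Y * (star U : Matrix n n ℝ)) := by rw [h1, mul_one]; noncomm_ring
      _ = _ := by noncomm_ring
  map_zero' := by
    show (U : Matrix n n ℝ) * 0 * (star U : Matrix n n ℝ) = 0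
    simp
  map_add' X Y := by
    show (U : Matrix n n ℝ) * (X + Y) * (star U : Matrix n n ℝ) = _ + _
    noncomm_ring
  commutes' r := by
    show (U : Matrix n n ℝ) * (algebraMap ℝ (Matrix n n ℝ) r) * (star U : Matrix n n ℝ) = _
    have h := (Algebra.commutes r ((U : Matrix n n ℝ))).symm
    rw [h, mul_assoc, (Matrix.mem_unitaryGroup_iff).mp U.2, mul_one]

lemma aeval_diagonal' (d : n → ℝ) (p : ℝ[X]) :
    aeval (diagonal d) p = diagonal (fun i => p.eval (d i)) := by
  have h := Polynomial.aeval_algHom_apply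
    (Matrix.diagonalAlgHom ℝ : (n → ℝ) →ₐ[ℝ] Matrix n n ℝ) d p
  simp only [Matrix.diagonalAlgHom_apply] at h
  rw [h]
  have h3 : (aeval d p : n → ℝ) = fun i => eval (d i) p := by
    funext i
    have h2 := Polynomial.aeval_algHom_apply (Pi.evalAlgHom ℝ (fun _ => ℝ) i) d p
    simp only [Pi.evalAlgHom_apply] at h2
    rw [← h2, Polynomial.coe_aeval_eq_eval]
  rw [h3]

lemma exists_aeval_eq_sqrt {A : Matrix n n ℝ} (hA : A.PosSemidef) :
    ∃ p : ℝ[X], aeval A p = hA.sqrt := by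
  classical
  set U := hA.1.eigenvectorUnitary with hU
  set d := hA.1.eigenvalues with hd
  set s : Finset ℝ := Finset.image d Finset.univ with hs
  refine ⟨Lagrange.interpolate s id Real.sqrt, ?_⟩
  have hinj : Set.InjOn id (s : Set ℝ) := Set.injOn_id _
  have heval : ∀ i : n, (Lagrange.interpolate s id Real.sqrt).eval (d i) = Real.sqrt (d i) :=
    fun i => Lagrange.eval_interpolate_at_node Real.sqrt hinj
      (Finset.mem_image_of_mem d (Finset.mem_univ i))
  have hspec := hA.1.spectral_theorem
  have hcoe : (RCLike.ofReal ∘ d : n → ℝ) = d := by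
    funext i; simp [RCLike.ofReal_real_eq_id]
  have hA_eq : A = unitaryConjAlgHom U (diagonal d) := by
    rw [hspec, hcoe]
    rfl
  conv_lhs => rw [hA_eq]
  rw [Polynomial.aeval_algHom_apply, aeval_diagonal']
  show (U : Matrix n n ℝ) * _ * (star U : Matrix n n ℝ) = _
  rw [Matrix.PosSemidef.sqrt]
  have hfun : (fun i => eval (d i) ((Lagrange.interpolate s id) Real.sqrt))
      = ((↑) ∘ Real.sqrt ∘ d : n → ℝ) := by
    funext i
    rw [heval i]
    simp [RCLike.ofReal_real_eq_id]
  rw [hfun]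
  rfl

lemma commute_aeval_right {M A : Matrix n n ℝ} (h : Commute M A) (p : ℝ[X]) :
    Commute M (aeval A p) := by
  induction p using Polynomial.induction_on' with
  | add p q hp hq => rw [map_add]; exact hp.add_right hq
  | monomial k a =>
    rw [Polynomial.aeval_monomial]
    exact (Algebra.commute_algebraMap_right a M).mul_right (h.pow_right k)

lemma commute_sqrt {M A : Matrix n n ℝ} (hA : A.PosSemidef) (h : Commute M A) :
    Commute M hA.sqrt := by
  obtain ⟨p, hp⟩ := exists_aeval_eq_sqrt hA
  rw [← hp]
  exact commute_aeval_right h p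

lemma posDef_of_posSemidef_det_ne_zero {M : Matrix n n ℝ} (h : M.PosSemidef)
    (hdet : M.det ≠ 0) : M.PosDef := by
  refine Matrix.PosDef.of_dotProduct_mulVec_pos h.1 fun x hx => ?_
  set T := h.sqrt with hT
  have hTT : T * T = M := h.sqrt_mul_self
  have hTdet : T.det ≠ 0 := by
    intro h0
    apply hdet
    rw [← hTT, Matrix.det_mul, h0, mul_zero]
  have hinj : Function.Injective T.mulVec :=
    Matrix.mulVec_injective_iff_isUnit.mpr ((Matrix.isUnit_iff_isUnit_det T).mpr hTdet.isUnit)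
  have hTx : T *ᵥ x ≠ 0 := by
    intro h0
    exact hx (hinj (h0.trans (Matrix.mulVec_zero T).symm))
  have hherm : Tᴴ = T := h.posSemidef_sqrt.1
  have key : star x ⬝ᵥ (M *ᵥ x) = star (T *ᵥ x) ⬝ᵥ (T *ᵥ x) := by
    rw [← hTT, ← Matrix.mulVec_mulVec, Matrix.dotProduct_mulVec, Matrix.star_mulVec, hherm]
  rw [key]
  exact Matrix.dotProduct_star_self_pos_iff.mpr hTx

lemma rayleigh_lower_bound {B : Matrix n n ℝ} (hB : B.IsHermitian) {c : ℝ}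
    (hc : ∀ i, c ≤ hB.eigenvalues i) (y : n → ℝ) :
    c * (y ⬝ᵥ y) ≤ y ⬝ᵥ (B *ᵥ y) := by
  set U : Matrix n n ℝ := (hB.eigenvectorUnitary : Matrix n n ℝ) with hU
  have hUU : U * star U = 1 := (Matrix.mem_unitaryGroup_iff).mp hB.eigenvectorUnitary.2
  have hcoe : (RCLike.ofReal ∘ hB.eigenvalues : n → ℝ) = hB.eigenvalues := by
    funext i; simp [RCLike.ofReal_real_eq_id]
  have hdiff : B - c • (1 : Matrix n n ℝ)
      = U * diagonal (fun i => hB.eigenvalues i - c) * star U := by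
    have hspec := hB.spectral_theorem
    rw [hcoe, Unitary.conjStarAlgAut_apply] at hspec
    have h1 : c • (1 : Matrix n n ℝ) = U * (c • (1 : Matrix n n ℝ)) * star U := by
      rw [Matrix.mul_smul, Matrix.smul_mul, mul_one, hUU]
    calc B - c • (1 : Matrix n n ℝ)
        = U * diagonal hB.eigenvalues * star U - U * (c • (1 : Matrix n n ℝ)) * star U := by
          rw [← hspec, ← h1]
      _ = U * (diagonal hB.eigenvalues - c • (1 : Matrix n n ℝ)) * star U := by
          rw [Matrix.mul_sub, Matrix.sub_mul]
      _ = U * diagonal (fun i => hB.eigenvalues i - c) * star U := by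
          rw [Matrix.smul_one_eq_diagonal, Matrix.diagonal_sub]
  have hpsd : (B - c • (1 : Matrix n n ℝ)).PosSemidef := by
    rw [hdiff]
    exact (Matrix.posSemidef_diagonal_iff.mpr
      fun i => sub_nonneg.mpr (hc i)).mul_mul_conjTranspose_same U
  have h2 := hpsd.dotProduct_mulVec_nonneg y
  simp only [star_trivial, Matrix.sub_mulVec, dotProduct_sub,
    Matrix.smul_mulVec, Matrix.one_mulVec, dotProduct_smul, smul_eq_mul] at h2
  linarith

lemma norm_withLp_symm (v : n → ℝ) :
    ‖(WithLp.equiv 2 (n → ℝ)).symm v‖ = Real.sqrt (v ⬝ᵥ v) := by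
  rw [EuclideanSpace.norm_eq]
  congr 1
  simp [dotProduct, Real.norm_eq_abs, sq_abs, sq]

end Lemma43Aux

open Lemma43Aux

/-- **Lemma 4.3 (i)**: for symmetric commuting `A, B` with `A` positive semidefinite and `B`
positive definite, and any `C`, `‖C(A^{1/2} − B^{1/2})‖₂ ≤ (λ_min^B)^{−1/2} ‖C(A − B)‖₂`. -/
theorem opNorm_mul_sqrt_sub_sqrt_le {q r : ℕ} (hq : 0 < q)
    (A B : Matrix (Fin q) (Fin q) ℝ)
    (hA : A.PosSemidef) (hB : B.PosDef) (hAB : A * B = B * A)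
    (C : Matrix (Fin r) (Fin q) ℝ)
    (lam : ℝ) (hlam : lam = ⨅ i, hB.1.eigenvalues i) :
    opNorm (C * (hA.sqrt - hB.posSemidef.sqrt))
      ≤ (Real.sqrt lam)⁻¹ * opNorm (C * (A - B)) := by
  classical
  haveI : Nonempty (Fin q) := ⟨⟨0, hq⟩⟩
  set SA := hA.sqrt with hSA
  set SB := hB.posSemidef.sqrt with hSB
  set S := SA + SB with hS_def
  -- commutation facts
  have hBA : Commute B A := hAB.symm
  have hB_SA : Commute B SA := commute_sqrt hA hBA
  have hSA_SB : Commute SA SB := commute_sqrt hB.posSemidef hB_SA.symm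
  -- SB is positive definite
  have hSBpsd : SB.PosSemidef := hB.posSemidef.posSemidef_sqrt
  have hSBdet : SB.det ≠ 0 := by
    intro h0
    have : B.det = 0 := by
      rw [← hB.posSemidef.sqrt_mul_self, Matrix.det_mul, ← hSB, h0, mul_zero]
    exact hB.det_pos.ne' this
  have hSBposdef : SB.PosDef := posDef_of_posSemidef_det_ne_zero hSBpsd hSBdet
  -- S is positive definite
  have hSpos : S.PosDef := Matrix.PosDef.posSemidef_add hA.posSemidef_sqrt hSBposdef
  have hSdet : IsUnit S.det := hSpos.det_pos.ne'.isUnit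
  have hSinv : S * S⁻¹ = 1 := Matrix.mul_nonsing_inv S hSdet
  -- matrix identity
  have hfact : (SA - SB) * S = A - B := by
    have h1 : SA * SA = A := hA.sqrt_mul_self
    have h2 : SB * SB = B := hB.posSemidef.sqrt_mul_self
    have hexp : (SA - SB) * (SA + SB) = SA * SA + (SA * SB - SB * SA) - SB * SB := by
      noncomm_ring
    rw [hS_def, hexp, hSA_SB, sub_self, add_zero, h1, h2]
  have hkey : C * (SA - SB) = (C * (A - B)) * S⁻¹ := by
    have h3 : SA - SB = (A - B) * S⁻¹ := by
      rw [← hfact, mul_assoc, hSinv, mul_one]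
    rw [h3]
    exact (Matrix.mul_assoc C (A - B) S⁻¹).symm
  -- facts about lam
  have hlam_le : ∀ i, lam ≤ hB.1.eigenvalues i := by
    intro i
    rw [hlam]
    exact ciInf_le (Set.Finite.bddBelow (Set.finite_range _)) i
  have hlam_pos : 0 < lam := by
    obtain ⟨i, hi⟩ := exists_eq_ciInf_of_finite (f := fun i => hB.1.eigenvalues i)
    rw [hlam, ← hi]
    exact hB.eigenvalues_pos i
  have hsqrtlam_pos : 0 < Real.sqrt lam := Real.sqrt_pos.mpr hlam_pos
  -- quantitative lower bound on ‖S y‖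
  have hquad : ∀ y : Fin q → ℝ, lam * (y ⬝ᵥ y) ≤ (S *ᵥ y) ⬝ᵥ (S *ᵥ y) := by
    intro y
    have hsymmT : Sᵀ = S := by
      have := hSpos.1
      rwa [← Matrix.conjTranspose_eq_transpose_of_trivial]
    have hvm : S *ᵥ y = y ᵥ* S := by
      have h5 := Matrix.mulVec_transpose S y
      rw [hsymmT] at h5
      exact h5
    have hstep : (S *ᵥ y) ⬝ᵥ (S *ᵥ y) = y ⬝ᵥ ((S * S) *ᵥ y) := by
      nth_rewrite 1 [hvm]
      rw [← Matrix.dotProduct_mulVec, Matrix.mulVec_mulVec]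
    -- SA * SB is positive semidefinite
    have hmulpsd : (SA * SB).PosSemidef := by
      set T := hSBpsd.sqrt with hT
      have hTT : T * T = SB := hSBpsd.sqrt_mul_self
      have hcommT : Commute SA T := commute_sqrt hSBpsd hSA_SB
      have hhermT : Tᴴ = T := hSBpsd.posSemidef_sqrt.1
      have : SA * SB = Tᴴ * SA * T := by
        rw [hhermT, ← hTT, ← mul_assoc, hcommT.eq, mul_assoc]
      rw [this]
      exact hA.posSemidef_sqrt.conjTranspose_mul_mul_same T
    have hexp2 : S * S = A + B + (SA * SB + SA * SB) := by
      have h1 : SA * SA = A := hA.sqrt_mul_self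
      have h2 : SB * SB = B := hB.posSemidef.sqrt_mul_self
      have : (SA + SB) * (SA + SB) = SA * SA + SB * SB + (SA * SB + SB * SA) := by
        noncomm_ring
      rw [hS_def, this, h1, h2, ← hSA_SB.eq]
    have hApsd := hA.dotProduct_mulVec_nonneg y
    have hmul := hmulpsd.dotProduct_mulVec_nonneg y
    simp only [star_trivial] at hApsd hmul
    have hray := rayleigh_lower_bound hB.1 hlam_le y
    rw [hstep, hexp2]
    simp only [Matrix.add_mulVec, dotProduct_add]
    linarith
  -- now the operator norm estimate
  rw [opNorm, opNorm]
  have hconst : 0 ≤ (Real.sqrt lam)⁻¹ *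
      ‖LinearMap.toContinuousLinearMap (Matrix.toEuclideanLin (C * (A - B)))‖ :=
    mul_nonneg (inv_nonneg.mpr (Real.sqrt_nonneg _)) (norm_nonneg _)
  refine ContinuousLinearMap.opNorm_le_bound _ hconst fun x => ?_
  set v : Fin q → ℝ := WithLp.equiv 2 (Fin q → ℝ) x with hv
  set y : Fin q → ℝ := S⁻¹ *ᵥ v with hy
  have hSy : S *ᵥ y = v := by
    rw [hy, Matrix.mulVec_mulVec, hSinv, Matrix.one_mulVec]
  have hx_eq : x = (WithLp.equiv 2 (Fin q → ℝ)).symm v := by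
    rw [hv]; simp
  have hnormx : ‖x‖ = Real.sqrt (v ⬝ᵥ v) := by
    rw [hx_eq, norm_withLp_symm]
  -- the image vector
  have happly : Matrix.toEuclideanLin (C * (SA - SB)) x
      = Matrix.toEuclideanLin (C * (A - B)) ((WithLp.equiv 2 (Fin q → ℝ)).symm y) := by
    rw [hx_eq, WithLp.equiv_symm_apply, Matrix.toEuclideanLin_apply_piLp_toLp,
      Matrix.toEuclideanLin_apply_piLp_toLp]
    congr 1
    rw [hkey, ← Matrix.mulVec_mulVec]
  have hny : ‖(WithLp.equiv 2 (Fin q → ℝ)).symm y‖ ≤ (Real.sqrt lam)⁻¹ * ‖x‖ := by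
    rw [norm_withLp_symm, hnormx]
    rw [le_inv_mul_iff₀ hsqrtlam_pos]
    have h4 : Real.sqrt (lam * (y ⬝ᵥ y)) ≤ Real.sqrt (v ⬝ᵥ v) := by
      have := hquad y
      rw [hSy] at this
      exact Real.sqrt_le_sqrt this
    rwa [Real.sqrt_mul hlam_pos.le] at h4
  calc ‖(LinearMap.toContinuousLinearMap (Matrix.toEuclideanLin (C * (SA - SB)))) x‖
      = ‖(LinearMap.toContinuousLinearMap (Matrix.toEuclideanLin (C * (A - B))))
          ((WithLp.equiv 2 (Fin q → ℝ)).symm y)‖ := by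
        rw [LinearMap.coe_toContinuousLinearMap', happly, ← LinearMap.coe_toContinuousLinearMap']
    _ ≤ ‖LinearMap.toContinuousLinearMap (Matrix.toEuclideanLin (C * (A - B)))‖ *
          ‖(WithLp.equiv 2 (Fin q → ℝ)).symm y‖ :=
        ContinuousLinearMap.le_opNorm _ _
    _ ≤ ‖LinearMap.toContinuousLinearMap (Matrix.toEuclideanLin (C * (A - B)))‖ *
          ((Real.sqrt lam)⁻¹ * ‖x‖) := by
        exact mul_le_mul_of_nonneg_left hny (norm_nonneg _)
    _ = (Real.sqrt lam)⁻¹ *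
          ‖LinearMap.toContinuousLinearMap (Matrix.toEuclideanLin (C * (A - B)))‖ * ‖x‖ := by
        ring
end
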